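/- For all natural numbers m and n, the join of spheres S^m * S^n is homotopy equivalent to S^(m+n+1). -/

import Mathlib

open unitInterval

/-- The gluing relation of the double mapping cylinder of a span `A ← C → B`. -/
inductive HPushoutRel {A B C : Type*} (f : C → A) (g : C → B) :
    (A ⊕ (C × I) ⊕ B) → (A ⊕ (C × I) ⊕ B) → Prop
  | glue_left (c : C) : HPushoutRel f g (.inl (f c)) (.inr (.inl (c, 0)))
  | glue_right (c : C) : HPushoutRel f g (.inr (.inr (g c))) (.inr (.inl (c, 1)))

/-- The homotopy pushout (double mapping cylinder) of a span `A ← C → B`. -/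
def HPushout {A B C : Type*} [TopologicalSpace A] [TopologicalSpace B] [TopologicalSpace C]
    (f : C → A) (g : C → B) : Type _ :=
  Quot (HPushoutRel f g)

instance {A B C : Type*} [TopologicalSpace A] [TopologicalSpace B] [TopologicalSpace C]
    (f : C → A) (g : C → B) : TopologicalSpace (HPushout f g) :=
  inferInstanceAs (TopologicalSpace (Quot _))

/-- The join of two spaces: the homotopy pushout of `A ← A × B → B`. -/
def Join (A B : Type*) [TopologicalSpace A] [TopologicalSpace B] : Type _ :=
  HPushout (Prod.fst : A × B → A) (Prod.snd : A × B → B)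

instance (A B : Type*) [TopologicalSpace A] [TopologicalSpace B] :
    TopologicalSpace (Join A B) :=
  inferInstanceAs (TopologicalSpace (HPushout _ _))

/-- The suspension of a space: the homotopy pushout of `1 ← A → 1`. -/
def Susp (A : Type*) [TopologicalSpace A] : Type _ :=
  HPushout (fun _ : A => PUnit.unit) (fun _ : A => PUnit.unit)

instance (A : Type*) [TopologicalSpace A] : TopologicalSpace (Susp A) :=
  inferInstanceAs (TopologicalSpace (HPushout _ _))

/-- Spheres (carrier with its topology): `S^0 = Bool`, `S^(n+1) = Susp (S^n)`. -/
def SpherePair : ℕ → (T : Type) × TopologicalSpace T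
  | 0 => ⟨Bool, inferInstance⟩
  | n + 1 =>
    letI := (SpherePair n).2
    ⟨Susp (SpherePair n).1, inferInstance⟩

/-- The `n`-sphere. -/
def Sphere (n : ℕ) : Type := (SpherePair n).1

instance (n : ℕ) : TopologicalSpace (Sphere n) := (SpherePair n).2

/-! ### Auxiliary machinery for `join_spheres` -/

noncomputable section JoinSpheresAux

open Real Set Metric

/-- Lift a compatible triple of maps off a homotopy pushout. -/
def HPushout.lift {A B C Z : Type*} [TopologicalSpace A] [TopologicalSpace B]
    [TopologicalSpace C] {f : C → A} {g : C → B}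
    (φA : A → Z) (φC : C × I → Z) (φB : B → Z)
    (h0 : ∀ c, φA (f c) = φC (c, 0)) (h1 : ∀ c, φB (g c) = φC (c, 1)) :
    HPushout f g → Z :=
  Quot.lift (Sum.elim φA (Sum.elim φC φB)) (by
    rintro _ _ (⟨c⟩ | ⟨c⟩)
    · exact h0 c
    · exact h1 c)

theorem HPushout.lift_continuous {A B C Z : Type*} [TopologicalSpace A] [TopologicalSpace B]
    [TopologicalSpace C] [TopologicalSpace Z] {f : C → A} {g : C → B}
    {φA : A → Z} {φC : C × I → Z} {φB : B → Z}
    {h0 : ∀ c, φA (f c) = φC (c, 0)} {h1 : ∀ c, φB (g c) = φC (c, 1)}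
    (cA : Continuous φA) (cC : Continuous φC) (cB : Continuous φB) :
    Continuous (HPushout.lift φA φC φB h0 h1) := by
  apply continuous_quot_lift
  exact cA.sumElim (cC.sumElim cB)

instance {A B C : Type*} [TopologicalSpace A] [TopologicalSpace B] [TopologicalSpace C]
    [CompactSpace A] [CompactSpace B] [CompactSpace C] (f : C → A) (g : C → B) :
    CompactSpace (HPushout f g) :=
  inferInstanceAs (CompactSpace (Quot _))

instance (A B : Type*) [TopologicalSpace A] [TopologicalSpace B]
    [CompactSpace A] [CompactSpace B] : CompactSpace (Join A B) :=
  inferInstanceAs (CompactSpace (HPushout _ _))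

instance (A : Type*) [TopologicalSpace A] [CompactSpace A] : CompactSpace (Susp A) :=
  inferInstanceAs (CompactSpace (HPushout _ _))

variable {E F : Type*} [NormedAddCommGroup E] [InnerProductSpace ℝ E]
  [NormedAddCommGroup F] [InnerProductSpace ℝ F]

/-- The pairing `E → F → WithLp 2 (E × F)`. -/
def pt (a : E) (b : F) : WithLp 2 (E × F) :=
  (WithLp.prodContinuousLinearEquiv 2 ℝ E F).symm (a, b)

theorem pt_inj {a a' : E} {b b' : F} (h : pt a b = pt a' b') : a = a' ∧ b = b' := by
  have h2 : (a, b) = (a', b') := (WithLp.prodContinuousLinearEquiv 2 ℝ E F).symm.injective h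
  exact ⟨congrArg Prod.fst h2, congrArg Prod.snd h2⟩

theorem pt_mem {a : E} {b : F} (h : ‖a‖ ^ 2 + ‖b‖ ^ 2 = 1) :
    pt a b ∈ sphere (0 : WithLp 2 (E × F)) 1 := by
  rw [mem_sphere_zero_iff_norm]
  have h2 : ‖pt a b‖ ^ 2 = 1 := by rw [WithLp.prod_norm_sq_eq_of_L2]; exact h
  calc ‖pt a b‖ = √(‖pt a b‖ ^ 2) := (Real.sqrt_sq (norm_nonneg _)).symm
    _ = 1 := by rw [h2]; exact Real.sqrt_one

theorem pt_cont {X : Type*} [TopologicalSpace X] {f : X → E} {g : X → F}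
    (hf : Continuous f) (hg : Continuous g) : Continuous fun x => pt (f x) (g x) :=
  (WithLp.prodContinuousLinearEquiv 2 ℝ E F).symm.continuous.comp (hf.prodMk hg)

theorem pt_eta (v : WithLp 2 (E × F)) : pt v.fst v.snd = v := rfl

theorem sphere_decomp (v : sphere (0 : WithLp 2 (E × F)) 1) :
    ‖(v : WithLp 2 (E × F)).fst‖ ^ 2 + ‖(v : WithLp 2 (E × F)).snd‖ ^ 2 = 1 := by
  rw [← WithLp.prod_norm_sq_eq_of_L2, mem_sphere_zero_iff_norm.mp v.2]; norm_num

/-- A linear isometry equivalence restricts to an equivalence of unit spheres. -/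
def sphereEquivOfLI (li : E ≃ₗᵢ[ℝ] F) :
    (sphere (0 : E) 1) ≃ (sphere (0 : F) 1) where
  toFun v := ⟨li v, by
    rw [mem_sphere_zero_iff_norm, li.norm_map, ← mem_sphere_zero_iff_norm]
    exact v.2⟩
  invFun w := ⟨li.symm w, by
    rw [mem_sphere_zero_iff_norm, li.symm.norm_map, ← mem_sphere_zero_iff_norm]
    exact w.2⟩
  left_inv v := by ext; simp
  right_inv w := by ext; simp

/-- A linear isometry equivalence restricts to a homeomorphism of unit spheres. -/
def sphereHomeoOfLI (li : E ≃ₗᵢ[ℝ] F) :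
    (sphere (0 : E) 1) ≃ₜ (sphere (0 : F) 1) where
  toEquiv := sphereEquivOfLI li
  continuous_toFun := by
    apply Continuous.subtype_mk
    exact li.continuous.comp continuous_subtype_val
  continuous_invFun := by
    apply Continuous.subtype_mk
    exact li.symm.continuous.comp continuous_subtype_val

/-- Unit spheres in real inner product spaces of equal finite rank are homeomorphic. -/
def sphereHomeoOfFinrank [FiniteDimensional ℝ E] [FiniteDimensional ℝ F]
    (h : Module.finrank ℝ E = Module.finrank ℝ F) :
    (sphere (0 : E) 1) ≃ₜ (sphere (0 : F) 1) :=
  sphereHomeoOfLI <| (stdOrthonormalBasis ℝ E).repr.trans <|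
    ((stdOrthonormalBasis ℝ F).reindex (finCongr h.symm)).repr.symm

section Susp

variable {X : Type*} [TopologicalSpace X]

/-- The canonical map from the suspension of `X` to the unit sphere of `WithLp 2 (E × ℝ)`,
given an identification of `X` with the unit sphere of `E`. -/
def suspToSphere (e : X ≃ₜ sphere (0 : E) 1) :
    Susp X → sphere (0 : WithLp 2 (E × ℝ)) 1 :=
  HPushout.lift
    (fun _ => ⟨pt 0 (-1), pt_mem (by norm_num)⟩)
    (fun p => ⟨pt (Real.sin (π * p.2) • (e p.1 : E)) (-Real.cos (π * p.2)),
      pt_mem (by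
        have h1 : ‖(e p.1 : E)‖ = 1 := mem_sphere_zero_iff_norm.mp (e p.1).2
        rw [norm_smul, h1, mul_one, norm_neg, Real.norm_eq_abs, Real.norm_eq_abs,
          sq_abs, sq_abs]
        exact Real.sin_sq_add_cos_sq _)⟩)
    (fun _ => ⟨pt 0 1, pt_mem (by norm_num)⟩)
    (fun x => by
      apply Subtype.ext
      show pt 0 (-1) = pt _ _
      norm_num [show (((0 : I) : ℝ)) = 0 from rfl])
    (fun x => by
      apply Subtype.ext
      show pt 0 1 = pt _ _
      norm_num [show (((1 : I) : ℝ)) = 1 from rfl])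

theorem suspToSphere_bijective (e : X ≃ₜ sphere (0 : E) 1) :
    Function.Bijective (suspToSphere e) := by
  constructor
  · -- injectivity
    have key : ∀ u v : PUnit ⊕ (X × I) ⊕ PUnit,
        suspToSphere e (Quot.mk _ u) = suspToSphere e (Quot.mk _ v) →
        (Quot.mk _ u : Susp X) = (Quot.mk _ v : Susp X) := by
      have hmem : ∀ t : I, π * (t : ℝ) ∈ Icc 0 π := by
        intro t
        constructor
        · exact mul_nonneg pi_pos.le t.2.1
        · nlinarith [t.2.2, pi_pos]
      rintro (u | ⟨x, t⟩ | u) (v | ⟨y, s⟩ | v) h <;>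
        simp only [suspToSphere, HPushout.lift, Quot.lift_mk, Sum.elim_inl, Sum.elim_inr,
          Subtype.mk.injEq] at h
      · rfl
      · -- left pole vs cylinder
        obtain ⟨hfst, hsnd⟩ := pt_inj h
        have hc : Real.cos (π * (s : ℝ)) = Real.cos 0 := by
          rw [Real.cos_zero]; linarith [hsnd]
        have hs0 : π * (s : ℝ) = 0 := Real.injOn_cos (hmem s) ⟨le_refl 0, pi_pos.le⟩ hc
        have hs : s = (0 : I) := Subtype.ext (by
          have := mul_eq_zero.mp hs0
          rcases this with h | h
          · exact absurd h pi_ne_zero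
          · exact h)
        cases u
        rw [hs]
        exact Quot.sound (HPushoutRel.glue_left y)
      · -- left pole vs right pole
        obtain ⟨hfst, hsnd⟩ := pt_inj h
        exact absurd hsnd (by norm_num)
      · -- cylinder vs left pole
        obtain ⟨hfst, hsnd⟩ := pt_inj h
        have hc : Real.cos (π * (t : ℝ)) = Real.cos 0 := by
          rw [Real.cos_zero]; linarith [hsnd]
        have ht0 : π * (t : ℝ) = 0 := Real.injOn_cos (hmem t) ⟨le_refl 0, pi_pos.le⟩ hc
        have ht : t = (0 : I) := Subtype.ext (by
          rcases mul_eq_zero.mp ht0 with h | h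
          · exact absurd h pi_ne_zero
          · exact h)
        cases v
        rw [ht]
        exact (Quot.sound (HPushoutRel.glue_left x)).symm
      · -- cylinder vs cylinder
        obtain ⟨hfst, hsnd⟩ := pt_inj h
        have hc : Real.cos (π * (t : ℝ)) = Real.cos (π * (s : ℝ)) := by linarith [hsnd]
        have hts' : π * (t : ℝ) = π * (s : ℝ) := Real.injOn_cos (hmem t) (hmem s) hc
        have hts : t = s := Subtype.ext (mul_left_cancel₀ pi_ne_zero hts')
        subst hts
        by_cases ht0 : (t : ℝ) = 0
        · have ht : t = (0 : I) := Subtype.ext ht0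
          rw [ht]
          exact (Quot.sound (HPushoutRel.glue_left x)).symm.trans
            (Quot.sound (HPushoutRel.glue_left y))
        · by_cases ht1 : (t : ℝ) = 1
          · have ht : t = (1 : I) := Subtype.ext ht1
            rw [ht]
            exact (Quot.sound (HPushoutRel.glue_right x)).symm.trans
              (Quot.sound (HPushoutRel.glue_right y))
          · have h0 : 0 < π * (t : ℝ) :=
              mul_pos pi_pos (lt_of_le_of_ne t.2.1 (Ne.symm ht0))
            have h1 : π * (t : ℝ) < π := by
              nlinarith [lt_of_le_of_ne t.2.2 ht1, pi_pos]
            have hsin : Real.sin (π * (t : ℝ)) ≠ 0 :=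
              (Real.sin_pos_of_pos_of_lt_pi h0 h1).ne'
            have hxy : (e x : E) = (e y : E) :=
              smul_right_injective E hsin hfst
            have : x = y := e.injective (Subtype.coe_injective hxy)
            rw [this]
      · -- cylinder vs right pole
        obtain ⟨hfst, hsnd⟩ := pt_inj h
        have hc : Real.cos (π * (t : ℝ)) = Real.cos π := by
          rw [Real.cos_pi]; linarith [hsnd]
        have ht' : π * (t : ℝ) = π := Real.injOn_cos (hmem t) ⟨pi_pos.le, le_refl π⟩ hc
        have ht : t = (1 : I) := Subtype.ext (by
          have : π * (t : ℝ) = π * 1 := by rw [ht', mul_one]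
          exact mul_left_cancel₀ pi_ne_zero this)
        cases v
        rw [ht]
        exact (Quot.sound (HPushoutRel.glue_right x)).symm
      · -- right pole vs left pole
        obtain ⟨hfst, hsnd⟩ := pt_inj h
        exact absurd hsnd (by norm_num)
      · -- right pole vs cylinder
        obtain ⟨hfst, hsnd⟩ := pt_inj h
        have hc : Real.cos (π * (s : ℝ)) = Real.cos π := by
          rw [Real.cos_pi]; linarith [hsnd]
        have hs' : π * (s : ℝ) = π := Real.injOn_cos (hmem s) ⟨pi_pos.le, le_refl π⟩ hc
        have hs : s = (1 : I) := Subtype.ext (by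
          have : π * (s : ℝ) = π * 1 := by rw [hs', mul_one]
          exact mul_left_cancel₀ pi_ne_zero this)
        cases u
        rw [hs]
        exact Quot.sound (HPushoutRel.glue_right y)
      · rfl
    intro q1 q2 h
    induction q1 using Quot.ind with | _ u =>
    induction q2 using Quot.ind with | _ v =>
    exact key u v h
  · -- surjectivity
    rintro v
    have hab := sphere_decomp v
    set a : E := (v : WithLp 2 (E × ℝ)).fst with ha_def
    set b : ℝ := (v : WithLp 2 (E × ℝ)).snd with hb_def
    have hb2 : b ^ 2 ≤ 1 := by
      rw [Real.norm_eq_abs, sq_abs] at hab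
      nlinarith [sq_nonneg ‖a‖]
    have hb1 : -1 ≤ -b ∧ -b ≤ 1 := by
      constructor <;> nlinarith [sq_nonneg (b - 1), sq_nonneg (b + 1)]
    by_cases ha : a = 0
    · have hbb : b * b = 1 := by
        rw [ha] at hab
        simp only [norm_zero] at hab
        rw [Real.norm_eq_abs, sq_abs] at hab
        nlinarith
      rcases mul_self_eq_one_iff.mp hbb with hb | hb
      · refine ⟨Quot.mk _ (Sum.inr (Sum.inr PUnit.unit)), Subtype.ext ?_⟩
        show pt 0 (1 : ℝ) = (v : WithLp 2 (E × ℝ))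
        rw [← pt_eta (v : WithLp 2 (E × ℝ)), ← ha_def, ← hb_def, ha, hb]
      · refine ⟨Quot.mk _ (Sum.inl PUnit.unit), Subtype.ext ?_⟩
        show pt 0 (-1 : ℝ) = (v : WithLp 2 (E × ℝ))
        rw [← pt_eta (v : WithLp 2 (E × ℝ)), ← ha_def, ← hb_def, ha, hb]
    · set θ := Real.arccos (-b) with hθ_def
      have hcos : Real.cos θ = -b := Real.cos_arccos hb1.1 hb1.2
      have hsin : Real.sin θ = ‖a‖ := by
        rw [hθ_def, Real.sin_arccos]
        have h2 : 1 - (-b) ^ 2 = ‖a‖ ^ 2 := by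
          rw [Real.norm_eq_abs, sq_abs] at hab
          nlinarith
        rw [h2, Real.sqrt_sq (norm_nonneg _)]
      have hθ0 : 0 ≤ θ := Real.arccos_nonneg _
      have hθπ : θ ≤ π := Real.arccos_le_pi _
      set t : I := ⟨θ / π, div_nonneg hθ0 pi_pos.le, (div_le_one pi_pos).mpr hθπ⟩ with ht_def
      have hna : ‖a‖ ≠ 0 := norm_ne_zero_iff.mpr ha
      set x : X := e.symm ⟨‖a‖⁻¹ • a, by
        rw [mem_sphere_zero_iff_norm, norm_smul, norm_inv, norm_norm,
          inv_mul_cancel₀ hna]⟩ with hx_def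
      refine ⟨Quot.mk _ (Sum.inr (Sum.inl (x, t))), Subtype.ext ?_⟩
      show pt (Real.sin (π * (t : ℝ)) • (e x : E)) (-Real.cos (π * (t : ℝ)))
        = (v : WithLp 2 (E × ℝ))
      have hπt : π * (t : ℝ) = θ := by
        show π * (θ / π) = θ
        field_simp
      rw [hπt, hcos, neg_neg, hsin, hx_def, Homeomorph.apply_symm_apply]
      show pt (‖a‖ • ‖a‖⁻¹ • a) b = _
      rw [smul_smul, mul_inv_cancel₀ hna, one_smul]
      exact pt_eta _

theorem suspToSphere_continuous (e : X ≃ₜ sphere (0 : E) 1) :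
    Continuous (suspToSphere e) := by
  apply HPushout.lift_continuous
  · exact continuous_const
  · apply Continuous.subtype_mk
    apply pt_cont
    · apply Continuous.smul
      · exact Real.continuous_sin.comp (continuous_const.mul
          (continuous_subtype_val.comp continuous_snd))
      · exact continuous_subtype_val.comp (e.continuous.comp continuous_fst)
    · exact Continuous.neg (Real.continuous_cos.comp (continuous_const.mul
        (continuous_subtype_val.comp continuous_snd)))
  · exact continuous_const

/-- The suspension of (a homeomorph of) a sphere is homeomorphic to a sphere. -/
def suspHomeo [CompactSpace X] [FiniteDimensional ℝ E] (e : X ≃ₜ sphere (0 : E) 1) :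
    Susp X ≃ₜ sphere (0 : WithLp 2 (E × ℝ)) 1 :=
  @Continuous.homeoOfEquivCompactToT2 _ _ _ _ _ _
    (Equiv.ofBijective _ (suspToSphere_bijective e)) (suspToSphere_continuous e)

end Susp

section JoinPart

variable {X Y : Type*} [TopologicalSpace X] [TopologicalSpace Y]

/-- The canonical map from the join of `X` and `Y` to the unit sphere of `WithLp 2 (E × F)`,
given identifications with unit spheres. -/
def joinToSphere (e₁ : X ≃ₜ sphere (0 : E) 1) (e₂ : Y ≃ₜ sphere (0 : F) 1) :
    Join X Y → sphere (0 : WithLp 2 (E × F)) 1 :=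
  HPushout.lift
    (fun x => ⟨pt (e₁ x : E) 0, pt_mem (by
      rw [mem_sphere_zero_iff_norm.mp (e₁ x).2]; norm_num)⟩)
    (fun p => ⟨pt (Real.cos (π * p.2 / 2) • (e₁ p.1.1 : E))
        (Real.sin (π * p.2 / 2) • (e₂ p.1.2 : F)),
      pt_mem (by
        rw [norm_smul, norm_smul, mem_sphere_zero_iff_norm.mp (e₁ p.1.1).2,
          mem_sphere_zero_iff_norm.mp (e₂ p.1.2).2, mul_one, mul_one,
          Real.norm_eq_abs, Real.norm_eq_abs, sq_abs, sq_abs]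
        exact Real.cos_sq_add_sin_sq _)⟩)
    (fun y => ⟨pt 0 (e₂ y : F), pt_mem (by
      rw [mem_sphere_zero_iff_norm.mp (e₂ y).2]; norm_num)⟩)
    (fun c => by
      apply Subtype.ext
      show pt _ _ = pt _ _
      norm_num [show (((0 : I) : ℝ)) = 0 from rfl])
    (fun c => by
      apply Subtype.ext
      show pt _ _ = pt _ _
      norm_num [show (((1 : I) : ℝ)) = 1 from rfl, Real.cos_pi_div_two, Real.sin_pi_div_two])

set_option maxHeartbeats 1000000 in
theorem joinToSphere_bijective (e₁ : X ≃ₜ sphere (0 : E) 1) (e₂ : Y ≃ₜ sphere (0 : F) 1) :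
    Function.Bijective (joinToSphere e₁ e₂) := by
  have hmem : ∀ t : I, π * (t : ℝ) / 2 ∈ Icc 0 π := by
    intro t
    constructor
    · exact div_nonneg (mul_nonneg pi_pos.le t.2.1) (by norm_num)
    · nlinarith [t.2.2, t.2.1, pi_pos]
  have hcosnn : ∀ t : I, 0 ≤ Real.cos (π * (t : ℝ) / 2) := by
    intro t
    apply Real.cos_nonneg_of_mem_Icc
    constructor
    · nlinarith [t.2.1, pi_pos, (hmem t).1]
    · nlinarith [t.2.2, pi_pos]
  have hteq : ∀ t s : I, π * (t : ℝ) / 2 = π * (s : ℝ) / 2 → t = s := by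
    intro t s h
    apply Subtype.ext
    have : π * (t : ℝ) = π * (s : ℝ) := by linarith
    exact mul_left_cancel₀ pi_ne_zero this
  have hnorm1 : ∀ x : X, ‖(e₁ x : E)‖ = 1 := fun x => mem_sphere_zero_iff_norm.mp (e₁ x).2
  have hnorm2 : ∀ y : Y, ‖(e₂ y : F)‖ = 1 := fun y => mem_sphere_zero_iff_norm.mp (e₂ y).2
  constructor
  · -- injectivity
    have key : ∀ u v : X ⊕ ((X × Y) × I) ⊕ Y,
        joinToSphere e₁ e₂ (Quot.mk _ u) = joinToSphere e₁ e₂ (Quot.mk _ v) →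
        (Quot.mk _ u : Join X Y) = (Quot.mk _ v : Join X Y) := by
      rintro (x | ⟨⟨x, y⟩, t⟩ | y) (x' | ⟨⟨x', y'⟩, s⟩ | y') h <;>
        simp only [joinToSphere, HPushout.lift, Quot.lift_mk, Sum.elim_inl, Sum.elim_inr,
          Subtype.mk.injEq] at h
      · -- inl vs inl
        obtain ⟨hfst, hsnd⟩ := pt_inj h
        rw [e₁.injective (Subtype.coe_injective hfst)]
      · -- inl vs cylinder
        obtain ⟨hfst, hsnd⟩ := pt_inj h
        -- 0 = sin θ • e₂ y'
        have hs0 : Real.sin (π * (s : ℝ) / 2) = 0 := by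
          have hn := congrArg norm hsnd
          rw [norm_zero, norm_smul, hnorm2, mul_one, Real.norm_eq_abs] at hn
          exact abs_eq_zero.mp hn.symm
        have hs0' : π * (s : ℝ) / 2 = 0 := by
          have := Real.sin_eq_zero_iff_of_lt_of_lt
            (by nlinarith [(hmem s).1, pi_pos] : -π < π * (s : ℝ) / 2)
            (by nlinarith [(hmem s).1, (hmem s).2, pi_pos, s.2.2] : π * (s : ℝ) / 2 < π)
          exact this.mp hs0
        have hs : s = (0 : I) := Subtype.ext (by
          show (s : ℝ) = ((0 : I) : ℝ)
          rw [show (((0 : I) : ℝ)) = 0 from rfl]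
          nlinarith [pi_pos])
        subst hs
        have hE : (e₁ x : E) = (e₁ x' : E) := by
          rw [hfst]
          norm_num [show (((0 : I) : ℝ)) = 0 from rfl]
        rw [e₁.injective (Subtype.coe_injective hE)]
        exact Quot.sound (HPushoutRel.glue_left (x', y'))
      · -- inl vs inr
        obtain ⟨hfst, hsnd⟩ := pt_inj h
        have := hnorm1 x
        rw [hfst, norm_zero] at this
        norm_num at this
      · -- cylinder vs inl
        obtain ⟨hfst, hsnd⟩ := pt_inj h
        have ht0 : Real.sin (π * (t : ℝ) / 2) = 0 := by
          have hn := congrArg norm hsnd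
          rw [norm_zero, norm_smul, hnorm2, mul_one, Real.norm_eq_abs] at hn
          exact abs_eq_zero.mp hn
        have ht0' : π * (t : ℝ) / 2 = 0 := by
          have := Real.sin_eq_zero_iff_of_lt_of_lt
            (by nlinarith [(hmem t).1, pi_pos] : -π < π * (t : ℝ) / 2)
            (by nlinarith [(hmem t).1, (hmem t).2, pi_pos, t.2.2] : π * (t : ℝ) / 2 < π)
          exact this.mp ht0
        have ht : t = (0 : I) := Subtype.ext (by
          show (t : ℝ) = ((0 : I) : ℝ)
          rw [show (((0 : I) : ℝ)) = 0 from rfl]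
          nlinarith [pi_pos])
        subst ht
        have hE : (e₁ x : E) = (e₁ x' : E) := by
          rw [← hfst]
          norm_num [show (((0 : I) : ℝ)) = 0 from rfl]
        rw [← e₁.injective (Subtype.coe_injective hE)]
        exact (Quot.sound (HPushoutRel.glue_left (x, y))).symm
      · -- cylinder vs cylinder
        obtain ⟨hfst, hsnd⟩ := pt_inj h
        have hcos : Real.cos (π * (t : ℝ) / 2) = Real.cos (π * (s : ℝ) / 2) := by
          have hn := congrArg norm hfst
          rw [norm_smul, norm_smul, hnorm1, hnorm1, mul_one, mul_one,
            Real.norm_eq_abs, Real.norm_eq_abs, abs_of_nonneg (hcosnn t),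
            abs_of_nonneg (hcosnn s)] at hn
          exact hn
        have hts : t = s := hteq t s (Real.injOn_cos (hmem t) (hmem s) hcos)
        subst hts
        by_cases ht0 : (t : ℝ) = 0
        · have ht : t = (0 : I) := Subtype.ext ht0
          subst ht
          have h1 : Real.cos (π * ((0 : I) : ℝ) / 2) = 1 := by
            norm_num [show (((0 : I) : ℝ)) = 0 from rfl]
          have hE : (e₁ x : E) = (e₁ x' : E) := by
            have := hfst
            rw [h1, one_smul, one_smul] at this
            exact this
          have hx : x = x' := e₁.injective (Subtype.coe_injective hE)
          rw [hx] at *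
          exact (Quot.sound (HPushoutRel.glue_left (x', y))).symm.trans
            (Quot.sound (HPushoutRel.glue_left (x', y')))
        · by_cases ht1 : (t : ℝ) = 1
          · have ht : t = (1 : I) := Subtype.ext ht1
            subst ht
            have h1 : Real.sin (π * ((1 : I) : ℝ) / 2) = 1 := by
              norm_num [show (((1 : I) : ℝ)) = 1 from rfl, Real.sin_pi_div_two]
            have hF : (e₂ y : F) = (e₂ y' : F) := by
              have := hsnd
              rw [h1, one_smul, one_smul] at this
              exact this
            have hy : y = y' := e₂.injective (Subtype.coe_injective hF)
            rw [hy] at *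
            exact (Quot.sound (HPushoutRel.glue_right (x, y'))).symm.trans
              (Quot.sound (HPushoutRel.glue_right (x', y')))
          · have htpos : 0 < (t : ℝ) := lt_of_le_of_ne t.2.1 (Ne.symm ht0)
            have htlt : (t : ℝ) < 1 := lt_of_le_of_ne t.2.2 ht1
            have hsinpos : Real.sin (π * (t : ℝ) / 2) ≠ 0 := by
              apply (Real.sin_pos_of_pos_of_lt_pi ?_ ?_).ne'
              · nlinarith [pi_pos]
              · nlinarith [pi_pos]
            have hcospos : Real.cos (π * (t : ℝ) / 2) ≠ 0 := by
              apply (Real.cos_pos_of_mem_Ioo ?_).ne'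
              constructor
              · nlinarith [pi_pos]
              · nlinarith [pi_pos]
            have hx : x = x' :=
              e₁.injective (Subtype.coe_injective (smul_right_injective E hcospos hfst))
            have hy : y = y' :=
              e₂.injective (Subtype.coe_injective (smul_right_injective F hsinpos hsnd))
            rw [hx, hy]
      · -- cylinder vs inr
        obtain ⟨hfst, hsnd⟩ := pt_inj h
        have hc0 : Real.cos (π * (t : ℝ) / 2) = 0 := by
          have hn := congrArg norm hfst
          rw [norm_zero, norm_smul, hnorm1, mul_one, Real.norm_eq_abs] at hn
          exact abs_eq_zero.mp hn
        have ht' : π * (t : ℝ) / 2 = π / 2 := by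
          exact Real.injOn_cos (hmem t)
            (show π / 2 ∈ Icc 0 π from ⟨by linarith [pi_pos], by linarith [pi_pos]⟩)
            (by rw [hc0, Real.cos_pi_div_two])
        have ht : t = (1 : I) := Subtype.ext (by
          show (t : ℝ) = ((1 : I) : ℝ)
          rw [show (((1 : I) : ℝ)) = 1 from rfl]
          have h2 : π * (t : ℝ) = π * 1 := by rw [mul_one]; linarith [ht']
          exact mul_left_cancel₀ pi_ne_zero h2)
        subst ht
        have h1 : Real.sin (π * ((1 : I) : ℝ) / 2) = 1 := by
          norm_num [show (((1 : I) : ℝ)) = 1 from rfl, Real.sin_pi_div_two]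
        rw [h1, one_smul] at hsnd
        have hy : y = y' := e₂.injective (Subtype.coe_injective hsnd)
        rw [hy]
        exact (Quot.sound (HPushoutRel.glue_right (x, y'))).symm
      · -- inr vs inl
        obtain ⟨hfst, hsnd⟩ := pt_inj h
        have := hnorm1 x'
        rw [← hfst, norm_zero] at this
        norm_num at this
      · -- inr vs cylinder
        obtain ⟨hfst, hsnd⟩ := pt_inj h
        have hc0 : Real.cos (π * (s : ℝ) / 2) = 0 := by
          have hn := congrArg norm hfst
          rw [norm_zero, norm_smul, hnorm1, mul_one, Real.norm_eq_abs] at hn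
          exact abs_eq_zero.mp hn.symm
        have hs' : π * (s : ℝ) / 2 = π / 2 := by
          exact Real.injOn_cos (hmem s)
            (show π / 2 ∈ Icc 0 π from ⟨by linarith [pi_pos], by linarith [pi_pos]⟩)
            (by rw [hc0, Real.cos_pi_div_two])
        have hs : s = (1 : I) := Subtype.ext (by
          show (s : ℝ) = ((1 : I) : ℝ)
          rw [show (((1 : I) : ℝ)) = 1 from rfl]
          have h2 : π * (s : ℝ) = π * 1 := by rw [mul_one]; linarith [hs']
          exact mul_left_cancel₀ pi_ne_zero h2)
        subst hs
        have h1 : Real.sin (π * ((1 : I) : ℝ) / 2) = 1 := by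
          norm_num [show (((1 : I) : ℝ)) = 1 from rfl, Real.sin_pi_div_two]
        rw [h1, one_smul] at hsnd
        have hy : y = y' := e₂.injective (Subtype.coe_injective hsnd)
        rw [hy]
        exact Quot.sound (HPushoutRel.glue_right (x', y'))
      · -- inr vs inr
        obtain ⟨hfst, hsnd⟩ := pt_inj h
        rw [e₂.injective (Subtype.coe_injective hsnd)]
    intro q1 q2 h
    induction q1 using Quot.ind with | _ u =>
    induction q2 using Quot.ind with | _ v =>
    exact key u v h
  · -- surjectivity
    rintro v
    have hab := sphere_decomp v
    set a : E := (v : WithLp 2 (E × F)).fst with ha_def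
    set b : F := (v : WithLp 2 (E × F)).snd with hb_def
    have hna1 : ‖a‖ ≤ 1 := by nlinarith [norm_nonneg a, norm_nonneg b, sq_nonneg ‖b‖]
    by_cases hb : b = 0
    · -- b = 0 : use inl
      have hna : ‖a‖ = 1 := by
        rw [hb, norm_zero] at hab
        nlinarith [norm_nonneg a]
      refine ⟨Quot.mk _ (Sum.inl (e₁.symm ⟨a, mem_sphere_zero_iff_norm.mpr hna⟩)),
        Subtype.ext ?_⟩
      simp only [joinToSphere, HPushout.lift, Quot.lift_mk, Sum.elim_inl,
        Homeomorph.apply_symm_apply]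
      show pt a 0 = (v : WithLp 2 (E × F))
      rw [← hb]
      exact pt_eta _
    by_cases ha : a = 0
    · -- a = 0 : use inr
      have hnb : ‖b‖ = 1 := by
        rw [ha, norm_zero] at hab
        nlinarith [norm_nonneg b]
      refine ⟨Quot.mk _ (Sum.inr (Sum.inr (e₂.symm ⟨b, mem_sphere_zero_iff_norm.mpr hnb⟩))),
        Subtype.ext ?_⟩
      simp only [joinToSphere, HPushout.lift, Quot.lift_mk, Sum.elim_inl, Sum.elim_inr,
        Homeomorph.apply_symm_apply]
      show pt 0 b = (v : WithLp 2 (E × F))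
      rw [← ha]
      exact pt_eta _
    · -- interior
      have hna : ‖a‖ ≠ 0 := norm_ne_zero_iff.mpr ha
      have hnb : ‖b‖ ≠ 0 := norm_ne_zero_iff.mpr hb
      set θ := Real.arccos ‖a‖ with hθ_def
      have hcos : Real.cos θ = ‖a‖ := Real.cos_arccos (by linarith [norm_nonneg a]) hna1
      have hsin : Real.sin θ = ‖b‖ := by
        rw [hθ_def, Real.sin_arccos]
        have h2 : 1 - ‖a‖ ^ 2 = ‖b‖ ^ 2 := by nlinarith
        rw [h2, Real.sqrt_sq (norm_nonneg _)]
      have hθ0 : 0 ≤ θ := Real.arccos_nonneg _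
      have hθhalf : θ ≤ π / 2 := Real.arccos_le_pi_div_two.mpr (norm_nonneg a)
      set t : I := ⟨2 * θ / π, by positivity,
        by rw [div_le_one pi_pos]; linarith⟩ with ht_def
      set x : X := e₁.symm ⟨‖a‖⁻¹ • a, by
        rw [mem_sphere_zero_iff_norm, norm_smul, norm_inv, norm_norm,
          inv_mul_cancel₀ hna]⟩ with hx_def
      set y : Y := e₂.symm ⟨‖b‖⁻¹ • b, by
        rw [mem_sphere_zero_iff_norm, norm_smul, norm_inv, norm_norm,
          inv_mul_cancel₀ hnb]⟩ with hy_def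
      refine ⟨Quot.mk _ (Sum.inr (Sum.inl ((x, y), t))), Subtype.ext ?_⟩
      simp only [joinToSphere, HPushout.lift, Quot.lift_mk, Sum.elim_inl, Sum.elim_inr]
      show pt (Real.cos (π * (t : ℝ) / 2) • (e₁ x : E)) (Real.sin (π * (t : ℝ) / 2) • (e₂ y : F))
        = (v : WithLp 2 (E × F))
      have hπt : π * (t : ℝ) / 2 = θ := by
        show π * (2 * θ / π) / 2 = θ
        field_simp
      rw [hπt, hcos, hsin, hx_def, hy_def, Homeomorph.apply_symm_apply,
        Homeomorph.apply_symm_apply]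
      show pt (‖a‖ • ‖a‖⁻¹ • a) (‖b‖ • ‖b‖⁻¹ • b) = _
      rw [smul_smul, smul_smul, mul_inv_cancel₀ hna, mul_inv_cancel₀ hnb, one_smul, one_smul]
      exact pt_eta _

theorem joinToSphere_continuous (e₁ : X ≃ₜ sphere (0 : E) 1) (e₂ : Y ≃ₜ sphere (0 : F) 1) :
    Continuous (joinToSphere e₁ e₂) := by
  apply HPushout.lift_continuous
  · apply Continuous.subtype_mk
    exact pt_cont (continuous_subtype_val.comp e₁.continuous) continuous_const
  · apply Continuous.subtype_mk
    have hI : Continuous fun p : (X × Y) × I => ((p.2 : ℝ)) :=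
      continuous_subtype_val.comp continuous_snd
    apply pt_cont
    · exact ((Real.continuous_cos.comp ((continuous_const.mul hI).div_const 2)).smul
        (continuous_subtype_val.comp (e₁.continuous.comp (continuous_fst.comp continuous_fst))))
    · exact ((Real.continuous_sin.comp ((continuous_const.mul hI).div_const 2)).smul
        (continuous_subtype_val.comp (e₂.continuous.comp (continuous_snd.comp continuous_fst))))
  · apply Continuous.subtype_mk
    exact pt_cont continuous_const (continuous_subtype_val.comp e₂.continuous)

/-- The join of (homeomorphs of) spheres is homeomorphic to a sphere. -/
def joinHomeo [CompactSpace X] [CompactSpace Y] [FiniteDimensional ℝ E] [FiniteDimensional ℝ F]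
    (e₁ : X ≃ₜ sphere (0 : E) 1) (e₂ : Y ≃ₜ sphere (0 : F) 1) :
    Join X Y ≃ₜ sphere (0 : WithLp 2 (E × F)) 1 :=
  @Continuous.homeoOfEquivCompactToT2 _ _ _ _ _ _
    (Equiv.ofBijective _ (joinToSphere_bijective e₁ e₂)) (joinToSphere_continuous e₁ e₂)

end JoinPart

/-- The model of `Bool` as the `0`-sphere. -/
def boolHomeo : Bool ≃ₜ sphere (0 : EuclideanSpace ℝ (Fin 1)) 1 := by
  have hmem : ∀ c : ℝ, |c| = 1 →
      (EuclideanSpace.single 0 c : EuclideanSpace ℝ (Fin 1)) ∈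
        sphere (0 : EuclideanSpace ℝ (Fin 1)) 1 := by
    intro c hc
    rw [mem_sphere_zero_iff_norm, EuclideanSpace.norm_single, Real.norm_eq_abs, hc]
  have hval : ∀ v : EuclideanSpace ℝ (Fin 1), ‖v‖ = |v 0| := by
    intro v
    rw [EuclideanSpace.norm_eq]
    simp [Fin.sum_univ_one, Real.sqrt_sq_eq_abs]
  refine @Continuous.homeoOfEquivCompactToT2 _ _ _ _ _ _
    (Equiv.ofBijective (fun b : Bool =>
      (⟨EuclideanSpace.single 0 (if b then 1 else -1),
        hmem _ (by cases b <;> norm_num)⟩ : sphere (0 : EuclideanSpace ℝ (Fin 1)) 1)) ⟨?_, ?_⟩)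
    (continuous_of_discreteTopology)
  · intro b b' h
    have h0 := congrArg (fun w : sphere (0 : EuclideanSpace ℝ (Fin 1)) 1 => (w : EuclideanSpace ℝ (Fin 1)) 0) h
    simp only [EuclideanSpace.single_apply] at h0
    cases b <;> cases b' <;> norm_num at h0 <;> rfl
  · rintro ⟨v, hv⟩
    have h1 : |v 0| = 1 := by rw [← hval, mem_sphere_zero_iff_norm.mp hv]
    have hfun : ∀ c : ℝ, v 0 = c →
        v = (EuclideanSpace.single 0 c : EuclideanSpace ℝ (Fin 1)) := by
      intro c hc
      ext i
      rw [Subsingleton.elim i 0]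
      simpa [EuclideanSpace.single_apply] using hc
    rcases abs_eq (by norm_num : (0:ℝ) ≤ 1) |>.mp h1 with h | h
    · exact ⟨true, Subtype.ext (hfun 1 h).symm⟩
    · exact ⟨false, Subtype.ext (hfun (-1) h).symm⟩

theorem sphere_model (n : ℕ) :
    Nonempty (Sphere n ≃ₜ sphere (0 : EuclideanSpace ℝ (Fin (n + 1))) 1) := by
  induction n with
  | zero => exact ⟨boolHomeo⟩
  | succ n ih =>
    obtain ⟨e⟩ := ih
    haveI : CompactSpace (Sphere n) := e.symm.compactSpace
    have hrank : Module.finrank ℝ (WithLp 2 (EuclideanSpace ℝ (Fin (n + 1)) × ℝ))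
        = Module.finrank ℝ (EuclideanSpace ℝ (Fin (n + 2))) := by
      rw [(WithLp.prodContinuousLinearEquiv 2 ℝ
        (EuclideanSpace ℝ (Fin (n + 1))) ℝ).toLinearEquiv.finrank_eq,
        Module.finrank_prod, finrank_euclideanSpace_fin, finrank_euclideanSpace_fin,
        Module.finrank_self]
    exact ⟨(suspHomeo e).trans (sphereHomeoOfFinrank hrank)⟩

end JoinSpheresAux

/-- The join of spheres: `S^m * S^n ≃ S^(m+n+1)`. -/
theorem join_spheres (m n : ℕ) :
    Nonempty (ContinuousMap.HomotopyEquiv (Join (Sphere m) (Sphere n))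
      (Sphere (m + n + 1))) := by
  obtain ⟨e₁⟩ := sphere_model m
  obtain ⟨e₂⟩ := sphere_model n
  obtain ⟨e₃⟩ := sphere_model (m + n + 1)
  haveI : CompactSpace (Sphere m) := e₁.symm.compactSpace
  haveI : CompactSpace (Sphere n) := e₂.symm.compactSpace
  have hrank : Module.finrank ℝ
        (WithLp 2 (EuclideanSpace ℝ (Fin (m + 1)) × EuclideanSpace ℝ (Fin (n + 1))))
      = Module.finrank ℝ (EuclideanSpace ℝ (Fin (m + n + 1 + 1))) := by
    rw [(WithLp.prodContinuousLinearEquiv 2 ℝ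
      (EuclideanSpace ℝ (Fin (m + 1))) (EuclideanSpace ℝ (Fin (n + 1)))).toLinearEquiv.finrank_eq,
      Module.finrank_prod, finrank_euclideanSpace_fin, finrank_euclideanSpace_fin,
      finrank_euclideanSpace_fin]
    omega
  exact ⟨((joinHomeo e₁ e₂).trans ((sphereHomeoOfFinrank hrank).trans
    e₃.symm)).toHomotopyEquiv⟩
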